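/- Let a : ℝ → ℝ be Lipschitz continuous and suppose that for every pair L1 < L2 the restriction of a to [L1,L2] attains its maximum at an interior point of (L1,L2). Then λ_p((L1,L2), d, a) → a(0) − d as the interval shrinks to the origin: for every ε > 0 there exists δ > 0 such that for all L1 < L2 with |L1| < δ and |L2| < δ, one has |λ_p((L1,L2), d, a) − (a(0) − d)| < ε. -/

import Mathlib

/-!
Evaluating the defining inequality at the midpoint `m` of `(L1, L2)` and dropping the nonnegative
integral term bounds every admissible `λ` below by `a m - d`. The constant test function `φ = 1`
is admissible for `λ = sup a - d + d · sup J · (L2 - L1)`. Both bounds tend to `a 0 - d` as the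
interval shrinks to the origin, by continuity of `a` at `0`.
-/

open MeasureTheory Set Filter Topology

noncomputable section

def KernelJ (J : ℝ → ℝ) : Prop :=
  Continuous J ∧ (∀ x, 0 ≤ J x) ∧ (∃ C, ∀ x, J x ≤ C) ∧
    (∀ x, J (-x) = J x) ∧ 0 < J 0 ∧ (∫ x : ℝ, J x) = 1

/-- The generalized principal eigenvalue of the nonlocal operator
`d∫_{L1}^{L2} J(x-y)φ(y)dy - dφ(x) + a(x)φ(x)` on `(L1, L2)`. -/
def lambdaP (J : ℝ → ℝ) (L1 L2 d : ℝ) (a : ℝ → ℝ) : ℝ :=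
  sInf {lam : ℝ | ∃ φ : ℝ → ℝ, ContinuousOn φ (Icc L1 L2) ∧
    (∀ x ∈ Icc L1 L2, 0 < φ x) ∧
    ∀ x ∈ Ioo L1 L2,
      d * (∫ y in L1..L2, J (x - y) * φ y) - d * φ x + a x * φ x ≤ lam * φ x}

def admissibleEigenvalues (J : ℝ → ℝ) (L1 L2 d : ℝ) (a : ℝ → ℝ) : Set ℝ :=
  {lam : ℝ | ∃ φ : ℝ → ℝ, ContinuousOn φ (Icc L1 L2) ∧
    (∀ x ∈ Icc L1 L2, 0 < φ x) ∧
    ∀ x ∈ Ioo L1 L2,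
      d * (∫ y in L1..L2, J (x - y) * φ y) - d * φ x + a x * φ x ≤ lam * φ x}

section Bounds

variable {J a : ℝ → ℝ} {L1 L2 d : ℝ}

theorem lambdaP_eq_sInf : lambdaP J L1 L2 d a = sInf (admissibleEigenvalues J L1 L2 d a) := rfl

theorem sub_le_of_mem_admissibleEigenvalues (hJ0 : ∀ x, 0 ≤ J x) (hd : 0 ≤ d) {x lam : ℝ}
    (hx : x ∈ Ioo L1 L2) (hlam : lam ∈ admissibleEigenvalues J L1 L2 d a) : a x - d ≤ lam := by
  obtain ⟨φ, -, hφpos, hφ⟩ := hlam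
  have hpos : 0 < φ x := hφpos x (Ioo_subset_Icc_self hx)
  have hint : 0 ≤ ∫ y in L1..L2, J (x - y) * φ y :=
    intervalIntegral.integral_nonneg (hx.1.le.trans hx.2.le) fun y hy =>
      mul_nonneg (hJ0 _) (hφpos y hy).le
  have : (a x - d) * φ x ≤ lam * φ x := by nlinarith [hφ x hx, mul_nonneg hd hint]
  exact le_of_mul_le_mul_right this hpos

theorem integral_kernel_le {C : ℝ} (hJc : Continuous J) (hC : ∀ x, J x ≤ C) (hL : L1 ≤ L2)
    (x : ℝ) : ∫ y in L1..L2, J (x - y) ≤ C * (L2 - L1) := by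
  calc ∫ y in L1..L2, J (x - y)
      ≤ ∫ _ in L1..L2, C :=
        intervalIntegral.integral_mono_on hL
          ((by fun_prop : Continuous fun y => J (x - y)).intervalIntegrable _ _)
          intervalIntegrable_const
          fun y _ => hC (x - y)
    _ = C * (L2 - L1) := by simp [mul_comm]

theorem mem_admissibleEigenvalues_of_le {C M : ℝ} (hJc : Continuous J) (hC : ∀ x, J x ≤ C)
    (hd : 0 ≤ d) (hL : L1 ≤ L2) (haM : ∀ x ∈ Ioo L1 L2, a x ≤ M) :
    M - d + d * (C * (L2 - L1)) ∈ admissibleEigenvalues J L1 L2 d a := by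
  refine ⟨fun _ => 1, continuousOn_const, fun _ _ => one_pos, fun x hx => ?_⟩
  have := mul_le_mul_of_nonneg_left (integral_kernel_le hJc hC hL x) hd
  simp only [mul_one]
  linarith [haM x hx]

theorem lambdaP_mem_Icc {C M x : ℝ} (hJc : Continuous J) (hJ0 : ∀ x, 0 ≤ J x)
    (hC : ∀ x, J x ≤ C) (hd : 0 ≤ d) (hx : x ∈ Ioo L1 L2) (haM : ∀ x ∈ Ioo L1 L2, a x ≤ M) :
    lambdaP J L1 L2 d a ∈ Icc (a x - d) (M - d + d * (C * (L2 - L1))) := by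
  have hmem := mem_admissibleEigenvalues_of_le hJc hC hd (hx.1.trans hx.2).le haM
  rw [lambdaP_eq_sInf]
  exact ⟨le_csInf ⟨_, hmem⟩ fun _ => sub_le_of_mem_admissibleEigenvalues hJ0 hd hx,
    csInf_le ⟨_, fun _ => sub_le_of_mem_admissibleEigenvalues hJ0 hd hx⟩ hmem⟩

theorem abs_lambdaP_sub_le {C δ η : ℝ} (hJc : Continuous J) (hJ0 : ∀ x, 0 ≤ J x)
    (hC : ∀ x, J x ≤ C) (hd : 0 ≤ d) (ha : ∀ x, |x| < δ → |a x - a 0| ≤ η) (hL : L1 < L2)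
    (hL1 : |L1| < δ) (hL2 : |L2| < δ) :
    |lambdaP J L1 L2 d a - (a 0 - d)| ≤ η + d * (C * (2 * δ)) := by
  rw [abs_lt] at hL1 hL2
  have haI : ∀ x ∈ Ioo L1 L2, |a x - a 0| ≤ η := fun x hx =>
    ha x (abs_lt.2 ⟨hL1.1.trans hx.1, hx.2.trans hL2.2⟩)
  have hm : (L1 + L2) / 2 ∈ Ioo L1 L2 := ⟨by linarith, by linarith⟩
  obtain ⟨hlo, hhi⟩ := lambdaP_mem_Icc (a := a) (M := a 0 + η) hJc hJ0 hC hd hm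
    fun x hx => by linarith [(abs_le.1 (haI x hx)).2]
  have hC0 : 0 ≤ C := (hJ0 0).trans (hC 0)
  have hwidth : d * (C * (L2 - L1)) ≤ d * (C * (2 * δ)) := by gcongr; linarith
  have hwidth0 : 0 ≤ d * (C * (2 * δ)) := by
    have : 0 ≤ δ := by linarith
    positivity
  exact abs_le.2 ⟨by linarith [(abs_le.1 (haI _ hm)).1], by linarith⟩

end Bounds

theorem lambdaP_limit_small_interval_general
    (J : ℝ → ℝ) (d : ℝ) (a : ℝ → ℝ)
    (hJ : KernelJ J) (hd : 0 < d)
    (haL : ∃ K, LipschitzWith K a) :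
    ∀ ε > (0:ℝ), ∃ δ > (0:ℝ), ∀ L1 L2 : ℝ, L1 < L2 → |L1| < δ → |L2| < δ →
      |lambdaP J L1 L2 d a - (a 0 - d)| < ε := by
  obtain ⟨hJc, hJ0, ⟨C, hC⟩, -⟩ := hJ
  obtain ⟨K, hK⟩ := haL
  intro ε hε
  obtain ⟨δ₀, hδ₀, ha⟩ :=
    Metric.continuousAt_iff.1 hK.continuous.continuousAt (ε / 2) (half_pos hε)
  have hC0 : 0 ≤ C := (hJ0 0).trans (hC 0)
  set δ := min δ₀ (ε / (4 * (d * C + 1)))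
  have hδ : 0 < δ := lt_min hδ₀ (by positivity)
  refine ⟨δ, hδ, fun L1 L2 hL hL1 hL2 => ?_⟩
  have hδε : δ * (4 * (d * C + 1)) ≤ ε := (le_div_iff₀ (by positivity)).1 (min_le_right _ _)
  have haδ : ∀ x, |x| < δ → |a x - a 0| ≤ ε / 2 := fun x hx => by
    have hx₀ : dist x 0 < δ₀ := by simpa [Real.dist_eq] using hx.trans_le (min_le_left _ _)
    simpa [Real.dist_eq] using (ha hx₀).le
  have := abs_lambdaP_sub_le hJc hJ0 hC hd.le haδ hL hL1 hL2
  linarith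

/-- Theorem 3.3 (ii): `λ_p((L1,L2), d, a) → a(0) - d` as the interval shrinks to the
origin. -/
theorem lambdaP_limit_small_interval
    (J : ℝ → ℝ) (d : ℝ) (a : ℝ → ℝ)
    (hJ : KernelJ J) (hd : 0 < d)
    (haL : ∃ K, LipschitzWith K a)
    (haH : ∀ L1 L2 : ℝ, L1 < L2 → ∃ x0 ∈ Ioo L1 L2, ∀ x ∈ Icc L1 L2, a x ≤ a x0) :
    ∀ ε > (0:ℝ), ∃ δ > (0:ℝ), ∀ L1 L2 : ℝ, L1 < L2 → |L1| < δ → |L2| < δ →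
      |lambdaP J L1 L2 d a - (a 0 - d)| < ε :=
  lambdaP_limit_small_interval_general J d a hJ hd haL
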